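/- If A is commutative, G is abelian and α is symmetric, then the commutant Comm(Ã) is a commutative subring of A ⋊_α^σ G. -/
import Mathlib


/-- A `G`-crossed system `{A, G, σ, α}`: a unital ring `A`, a group `G`,
`σ : G → Aut(A)` and a `σ`-cocycle `α : G × G → U(A)` satisfying the
crossed-system axioms (i)-(iii). -/
structure CrossedSystem (A : Type*) [Ring A] (G : Type*) [Group G] where
  σ : G → RingAut A
  α : G → G → Aˣ
  compat : ∀ x y : G, ∀ a : A,
    σ x (σ y a) = (α x y : A) * σ (x * y) a * ((α x y)⁻¹ : Aˣ)
  cocycle : ∀ x y z : G,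
    (α x y : A) * (α (x * y) z : A) = σ x (α y z : A) * (α x (y * z) : A)
  unit_right : ∀ x : G, α x 1 = 1
  unit_left : ∀ x : G, α 1 x = 1

variable {A : Type*} [CommRing A] {G : Type*} [Group G]

/-- Multiplication of the crossed product `A ⋊_α^σ G`, realized on the free
left `A`-module `G →₀ A`: `(a x̄)(b ȳ) = a σ_x(b) α(x,y) (x*y)‾`. -/
noncomputable def cmul (C : CrossedSystem A G) (f g : G →₀ A) : G →₀ A :=
  f.sum fun s a => g.sum fun t b =>
    Finsupp.single (s * t) (a * C.σ s b * (C.α s t : A))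

/-- The element `1_A ē` of the crossed product. -/
noncomputable def cone : G →₀ A := Finsupp.single 1 1

/-- The canonical embedding `ι : A → A ⋊_α^σ G`, `a ↦ a ē`; its range is `Ã`. -/
noncomputable def cemb (a : A) : G →₀ A := Finsupp.single 1 a

/-- The commutant `Comm(Ã)` of the embedded base ring in the crossed product. -/
noncomputable def cCommutant (C : CrossedSystem A G) : Set (G →₀ A) :=
  {x | ∀ a : A, cmul C (cemb a) x = cmul C x (cemb a)}

/-- `I` is a (non-unital) two-sided ideal of the crossed product `A ⋊_α^σ G`. -/
def cIsIdeal (C : CrossedSystem A G) (I : Set (G →₀ A)) : Prop :=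
  0 ∈ I ∧ (∀ x ∈ I, ∀ y ∈ I, x + y ∈ I) ∧ (∀ x ∈ I, -x ∈ I) ∧
    (∀ x ∈ I, ∀ y : G →₀ A, cmul C y x ∈ I ∧ cmul C x y ∈ I)

lemma sigma_one (C : CrossedSystem A G) (a : A) : C.σ 1 a = a := by
  have h := C.compat 1 1 a
  simp [C.unit_right] at h
  exact h

lemma comm_prop (C : CrossedSystem A G) (x : G →₀ A) (hx : x ∈ cCommutant C)
    (s : G) (a : A) : x s * C.σ s a = x s * a := by
  classical
  have h := congrArg (fun f : G →₀ A => f s) (hx a)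
  simp only [cmul, cemb] at h
  rw [Finsupp.sum_single_index (by simp)] at h
  simp only [one_mul, C.unit_left, sigma_one, Units.val_one, mul_one] at h
  simp [Finsupp.sum_apply, Finsupp.sum_single_index, Finsupp.single_apply, C.unit_right,
    Units.val_one, mul_one, Finsupp.sum_ite_eq'] at h
  by_cases hxs : x s = 0
  · simp [hxs]
  · simp [hxs] at h
    rw [← h, mul_comm]

theorem stmt_16 (C : CrossedSystem A G)
    (hG : ∀ x y : G, x * y = y * x)
    (hα : ∀ x y : G, C.α x y = C.α y x) :
    ∀ x ∈ cCommutant C, ∀ y ∈ cCommutant C, cmul C x y = cmul C y x := by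
  intro x hx y hy
  unfold cmul
  rw [Finsupp.sum_comm]
  refine Finsupp.sum_congr fun s hs => Finsupp.sum_congr fun t ht => ?_
  rw [comm_prop C x hx t (y s), comm_prop C y hy s (x t), hG t s, hα t s,
    mul_comm (x t) (y s)]
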